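/- arXiv:2304.01730 — 2 statements merged into one kernel-verified Lean document; each statement's English description precedes it below -/
import Mathlib

section
/- The union over all α ∈ E(1,ψ) of the sets {α} × W(α, n, ψ) is contained in E(n+1, ψ), which in turn is contained in W(n+1, ψ). -/
open MeasureTheory Filter Set

noncomputable section

/-- distance to the nearest integer -/
def nid (x : ℝ) : ℝ := |x - round x|

/-- membership in W(n,ψ): x ∈ [0,1]^n and max_i |x_i - p_i/q| < ψ q for infinitely many q. -/
def memW (n : ℕ) (ψ : ℕ → ℝ) (x : Fin n → ℝ) : Prop :=
  (∀ i, x i ∈ Set.Icc (0:ℝ) 1) ∧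
  {q : ℕ | 0 < q ∧ ∃ p : Fin n → ℤ, ∀ i, |x i - (p i : ℝ) / (q : ℝ)| < ψ q}.Infinite

/-- membership in E(n,ψ) = W(n,ψ) \ ⋃_{0<c<1} W(n,cψ). -/
def memE (n : ℕ) (ψ : ℕ → ℝ) (x : Fin n → ℝ) : Prop :=
  memW n ψ x ∧ ∀ c : ℝ, 0 < c → c < 1 → ¬ memW n (fun q => c * ψ q) x

/-- the fibre W(α, k, ψ) = {x : (α, x) ∈ W(l+k, ψ)}. -/
def fibW (l k : ℕ) (ψ : ℕ → ℝ) (α : Fin l → ℝ) : Set (Fin k → ℝ) :=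
  {x | memW (l + k) ψ (Fin.append α x)}

theorem stmt1 (n : ℕ) (hn : 1 ≤ n) (ψ : ℕ → ℝ)
    (hmono : ∀ p q : ℕ, p ≤ q → ψ q ≤ ψ p) (hψ : ∀ q, 0 < ψ q ∧ ψ q ≤ 1) :
    (⋃ α ∈ {a : ℝ | memE 1 ψ (fun _ => a)},
        {y : Fin (n + 1) → ℝ | ∃ x : Fin n → ℝ, y = Fin.cons α x ∧ memW (n + 1) ψ y})
      ⊆ {y : Fin (n + 1) → ℝ | memE (n + 1) ψ y} ∧
    {y : Fin (n + 1) → ℝ | memE (n + 1) ψ y} ⊆ {y : Fin (n + 1) → ℝ | memW (n + 1) ψ y} := by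
  constructor
  · intro y hy
    simp only [Set.mem_iUnion, Set.mem_setOf_eq] at hy
    obtain ⟨α, hα, x, rfl, hW⟩ := hy
    refine ⟨hW, ?_⟩
    intro c hc0 hc1 hWc
    apply hα.2 c hc0 hc1
    refine ⟨fun i => hα.1.1 i, ?_⟩
    apply Set.Infinite.mono _ hWc.2
    intro q hq
    obtain ⟨hq0, p, hp⟩ := hq
    refine ⟨hq0, fun _ => p 0, fun i => ?_⟩
    have := hp 0
    simpa using this
  · intro y hy
    exact hy.1
end
end

section
/- Let ψ : ℕ → (0,1] be non-increasing with φ(q) := q ψ(q) ≤ 1, and suppose k ≥ 2, 0 < s ≤ k, α ∈ W(l,ψ), and liminf_{q→∞} q^{k−s} φ(q)^s > 0. Then, with ψ_α(q) := ψ(q) if max_i ‖qα_i‖ < φ(q) and 0 otherwise, the set W(k, ψ_α^{s/k}) := {x ∈ [0,1]^k : max_j |x_j − p_j/q| < ψ_α(q)^{s/k} for infinitely many q, p ∈ ℤ^k} has full k-dimensional Lebesgue measure in [0,1]^k. -/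
open MeasureTheory Filter Set

noncomputable section

open scoped ENNReal Topology

/-!
On each of the infinitely many `q` with `max_i |α_i - p_i/q| < ψ q` we have `‖q α_i‖ < q ψ q`, so
`ψ_α q = ψ q`, and the liminf hypothesis gives `q^k ψ(q)^s ≥ c`, i.e. `ψ_α(q)^(s/k) ≥ c^(1/k)/q`,
once `q` is large. It therefore suffices that for every infinite `S ⊆ ℕ` and `δ > 0`, almost every
`x ∈ [0,1]^k` has `max_j ‖q x_j‖ < δ` for infinitely many `q ∈ S`.

Along a lacunary sequence `u_n ∈ S` (`2^j u_i ≤ u_j` for `i < j`) the events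
`A_n = {max_j ‖u_n x_j‖ < δ}` are quasi-independent: `μ A_n ≥ (2δ)^k - O(2^-n)` and
`μ (A_i ∩ A_j) ≤ (2δ)^(2k) + O(2^-i + 2^-j)`. The Chung–Erdős inequality
`(∑ μ A_n)^2 ≤ μ (⋃ A_n) * ∑∑ μ (A_i ∩ A_j)` then gives every tail union, hence `limsup A_n`,
full measure; this is the special case of Gallagher's theorem that the argument needs.
-/

section SecondMoment

variable {β ι : Type*} [MeasurableSpace β] {μ : Measure β}

theorem sq_lintegral_mul_le {f g : β → ℝ≥0∞} (hf : AEMeasurable f μ) (hg : AEMeasurable g μ) :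
    (∫⁻ x, f x * g x ∂μ) ^ 2 ≤ (∫⁻ x, f x ^ 2 ∂μ) * ∫⁻ x, g x ^ 2 ∂μ := by
  have h := ENNReal.lintegral_mul_le_Lp_mul_Lq μ Real.HolderConjugate.two_two hf hg
  simp only [Pi.mul_apply, ENNReal.rpow_two] at h
  calc _ ≤ ((∫⁻ x, f x ^ 2 ∂μ) ^ (1 / 2 : ℝ) * (∫⁻ x, g x ^ 2 ∂μ) ^ (1 / 2 : ℝ)) ^ 2 :=
        pow_le_pow_left' h 2
    _ = _ := by
        simp only [mul_pow, ← ENNReal.rpow_two, ← ENNReal.rpow_mul]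
        norm_num

/-- The Chung–Erdős inequality. -/
theorem sq_sum_measure_le_measure_biUnion_mul (F : Finset ι) {A : ι → Set β}
    (hA : ∀ i, MeasurableSet (A i)) :
    (∑ i ∈ F, μ (A i)) ^ 2 ≤ μ (⋃ i ∈ F, A i) * ∑ i ∈ F, ∑ j ∈ F, μ (A i ∩ A j) := by
  set f : β → ℝ≥0∞ := fun x => ∑ i ∈ F, (A i).indicator 1 x
  set U := ⋃ i ∈ F, A i
  have hU : MeasurableSet U := F.measurableSet_biUnion fun i _ => hA i
  have hf : Measurable f := Finset.measurable_sum _ fun i _ => measurable_one.indicator (hA i)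
  have hfU (x : β) : U.indicator 1 x * f x = f x := by
    by_cases hx : x ∈ U
    · simp [hx]
    · have : f x = 0 := Finset.sum_eq_zero fun i hi =>
        indicator_of_notMem (fun hxi => hx (mem_biUnion hi hxi)) _
      simp [this]
  have hint : ∫⁻ x, f x ∂μ = ∑ i ∈ F, μ (A i) := by
    rw [lintegral_finsetSum _ fun i _ => measurable_one.indicator (hA i)]
    simp [lintegral_indicator_one (hA _)]
  have hsq : ∫⁻ x, f x ^ 2 ∂μ = ∑ i ∈ F, ∑ j ∈ F, μ (A i ∩ A j) := by
    have hpt (x : β) : f x ^ 2 = ∑ i ∈ F, ∑ j ∈ F, (A i ∩ A j).indicator 1 x := by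
      simp [f, sq, Finset.sum_mul_sum, inter_indicator_one]
    rw [lintegral_congr hpt, lintegral_finsetSum _ fun i _ => Finset.measurable_sum _ fun j _ =>
      measurable_one.indicator ((hA i).inter (hA j))]
    refine Finset.sum_congr rfl fun i _ => ?_
    rw [lintegral_finsetSum _ fun j _ => measurable_one.indicator ((hA i).inter (hA j))]
    simp [lintegral_indicator_one ((hA i).inter (hA _))]
  have hind : ∫⁻ x, U.indicator 1 x ^ 2 ∂μ = μ U := by
    have hpt (x : β) : U.indicator (1 : β → ℝ≥0∞) x ^ 2 = U.indicator 1 x := by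
      by_cases hx : x ∈ U <;> simp [hx]
    rw [lintegral_congr hpt, lintegral_indicator_one hU]
  calc (∑ i ∈ F, μ (A i)) ^ 2 = (∫⁻ x, U.indicator 1 x * f x ∂μ) ^ 2 := by simp_rw [hfU, hint]
    _ ≤ _ := sq_lintegral_mul_le (measurable_one.indicator hU).aemeasurable hf.aemeasurable
    _ = _ := by rw [hind, hsq]

theorem sq_sum_measureReal_le [IsFiniteMeasure μ] (F : Finset ι) {A : ι → Set β}
    (hA : ∀ i, MeasurableSet (A i)) :
    (∑ i ∈ F, μ.real (A i)) ^ 2 ≤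
      μ.real (⋃ i ∈ F, A i) * ∑ i ∈ F, ∑ j ∈ F, μ.real (A i ∩ A j) := by
  have h := ENNReal.toReal_mono (by simp [ENNReal.mul_eq_top, ENNReal.sum_eq_top, measure_ne_top])
    (sq_sum_measure_le_measure_biUnion_mul (μ := μ) F hA)
  simpa [measureReal_def, ENNReal.toReal_sum, ENNReal.toReal_mul, ENNReal.toReal_pow] using h

theorem one_le_of_eventually_sq_sub_le {a E C p : ℝ} (ha : a ≠ 0)
    (h : ∀ᶠ N : ℕ in atTop, ((N : ℝ) * a - E) ^ 2 ≤ p * ((N : ℝ) ^ 2 * a ^ 2 + C * N)) :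
    1 ≤ p := by
  have hlim (D : ℝ) : Tendsto (fun N : ℕ => D / (N : ℝ)) atTop (𝓝 0) :=
    tendsto_const_div_atTop_nhds_zero_nat D
  have hle : a ^ 2 ≤ p * a ^ 2 := by
    refine le_of_tendsto_of_tendsto (f := fun N : ℕ => (a - E / N) ^ 2)
      (g := fun N : ℕ => p * (a ^ 2 + C / N))
      (by simpa using (tendsto_const_nhds.sub (hlim E)).pow 2)
      (by simpa using ((tendsto_const_nhds.add (hlim C)).const_mul p)) ?_
    filter_upwards [h, eventually_gt_atTop 0] with N hN hN0
    have hN0' : (0 : ℝ) < N := by exact_mod_cast hN0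
    calc (a - E / N) ^ 2 = ((N : ℝ) * a - E) ^ 2 / (N : ℝ) ^ 2 := by field_simp
      _ ≤ p * ((N : ℝ) ^ 2 * a ^ 2 + C * N) / (N : ℝ) ^ 2 := by gcongr
      _ = p * (a ^ 2 + C / N) := by field_simp
  exact le_of_mul_le_mul_right (by simpa using hle) (by positivity)

variable {A : ℕ → Set β} {a : ℝ} {e : ℕ → ℝ}

theorem card_mul_sub_tsum_le_sum_measureReal (he0 : ∀ n, 0 ≤ e n) (he : Summable e)
    (hlow : ∀ n, a - e n ≤ μ.real (A n)) (F : Finset ℕ) :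
    F.card * a - ∑' n, e n ≤ ∑ n ∈ F, μ.real (A n) := by
  calc F.card * a - ∑' n, e n ≤ ∑ n ∈ F, (a - e n) := by
        rw [Finset.sum_sub_distrib, Finset.sum_const, nsmul_eq_mul]
        linarith [he.sum_le_tsum F fun n _ => he0 n]
    _ ≤ _ := Finset.sum_le_sum fun n _ => hlow n

variable [IsProbabilityMeasure μ]

theorem sum_sum_measureReal_inter_le (he0 : ∀ n, 0 ≤ e n) (he : Summable e)
    (hpair : ∀ i j, i ≠ j → μ.real (A i ∩ A j) ≤ a ^ 2 + e i + e j) (F : Finset ℕ) :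
    ∑ i ∈ F, ∑ j ∈ F, μ.real (A i ∩ A j) ≤
      (F.card : ℝ) ^ 2 * a ^ 2 + (2 * ∑' n, e n + 1) * F.card := by
  have hterm (i j : ℕ) : μ.real (A i ∩ A j) ≤ a ^ 2 + e i + e j + if i = j then 1 else 0 := by
    by_cases hij : i = j
    · subst hij
      have : μ.real (A i ∩ A i) ≤ 1 := measureReal_le_one
      simp only [if_true]
      nlinarith [he0 i]
    · simpa [hij] using hpair i j hij
  calc _ ≤ ∑ i ∈ F, ∑ j ∈ F, (a ^ 2 + e i + e j + if i = j then 1 else 0) :=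
        Finset.sum_le_sum fun i _ => Finset.sum_le_sum fun j _ => hterm i j
    _ = (F.card : ℝ) ^ 2 * a ^ 2 + 2 * F.card * ∑ n ∈ F, e n + F.card := by
        simp only [Finset.sum_add_distrib, Finset.sum_const, nsmul_eq_mul, Finset.sum_ite_eq,
          ← Finset.mul_sum, Finset.sum_ite_mem, Finset.inter_self, mul_one]
        ring
    _ ≤ _ := by
        nlinarith [he.sum_le_tsum F fun n _ => he0 n, (Nat.cast_nonneg F.card : (0 : ℝ) ≤ F.card)]

theorem measure_iUnion_ge_eq_one_of_measureReal_inter_le (hA : ∀ n, MeasurableSet (A n))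
    (ha : 0 < a) (he0 : ∀ n, 0 ≤ e n) (he : Summable e)
    (hlow : ∀ n, a - e n ≤ μ.real (A n))
    (hpair : ∀ i j, i ≠ j → μ.real (A i ∩ A j) ≤ a ^ 2 + e i + e j) (m : ℕ) :
    μ (⋃ n ≥ m, A n) = 1 := by
  set E := ∑' n, e n
  set p := μ.real (⋃ n ≥ m, A n)
  have hp : 1 ≤ p := by
    refine one_le_of_eventually_sq_sub_le (E := E) (C := 2 * E + 1) ha.ne' ?_
    have hlarge := (tendsto_natCast_atTop_atTop.atTop_mul_const ha).eventually_ge_atTop E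
    filter_upwards [hlarge] with N hN
    set F := Finset.Ico m (m + N)
    have hcard : F.card = N := by simp [F]
    have hsub : (⋃ n ∈ F, A n) ⊆ ⋃ n ≥ m, A n :=
      iUnion₂_mono' fun n hn => ⟨n, (Finset.mem_Ico.1 hn).1, subset_rfl⟩
    calc ((N : ℝ) * a - E) ^ 2 ≤ (∑ n ∈ F, μ.real (A n)) ^ 2 := by
          exact pow_le_pow_left₀ (by linarith)
            (by simpa [hcard] using card_mul_sub_tsum_le_sum_measureReal he0 he hlow F) 2
      _ ≤ μ.real (⋃ n ∈ F, A n) * ∑ i ∈ F, ∑ j ∈ F, μ.real (A i ∩ A j) :=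
          sq_sum_measureReal_le F hA
      _ ≤ p * ((N : ℝ) ^ 2 * a ^ 2 + (2 * E + 1) * N) := by
          gcongr
          · exact measureReal_mono hsub (measure_ne_top μ _)
          · simpa [hcard] using sum_sum_measureReal_inter_le he0 he hpair F
  refine le_antisymm prob_le_one ?_
  simpa using (ENNReal.ofReal_le_iff_le_toReal (measure_ne_top μ _)).2 hp

theorem measure_limsup_eq_one_of_measureReal_inter_le (hA : ∀ n, MeasurableSet (A n))
    (ha : 0 < a) (he0 : ∀ n, 0 ≤ e n) (he : Summable e)
    (hlow : ∀ n, a - e n ≤ μ.real (A n))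
    (hpair : ∀ i j, i ≠ j → μ.real (A i ∩ A j) ≤ a ^ 2 + e i + e j) :
    μ (limsup A atTop) = 1 := by
  rw [← prob_compl_eq_zero_iff (MeasurableSet.measurableSet_limsup hA), limsup_eq_iInf_iSup_of_nat]
  simp only [iSup_eq_iUnion, iInf_eq_iInter, compl_iInter]
  refine measure_iUnion_null fun m => ?_
  rw [prob_compl_eq_zero_iff (MeasurableSet.iUnion fun n => MeasurableSet.iUnion fun _ => hA n)]
  exact measure_iUnion_ge_eq_one_of_measureReal_inter_le hA ha he0 he hlow hpair m

end SecondMoment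

theorem pow_le_pow_add_mul_of_le_add {x y ε : ℝ} (k : ℕ) (hx : 0 ≤ x) (hx1 : x ≤ 1) (hy : 0 ≤ y)
    (hy1 : y ≤ 1) (hε : 0 ≤ ε) (h : x ≤ y + ε) : x ^ k ≤ y ^ k + k * ε := by
  rcases le_total x y with hxy | hyx
  · have := pow_le_pow_left₀ hx hxy k
    nlinarith [(Nat.cast_nonneg k : (0 : ℝ) ≤ k)]
  · have hmax : max |x| |y| ^ (k - 1) ≤ 1 :=
      pow_le_one₀ (by positivity) (max_le (by rwa [abs_of_nonneg hx]) (by rwa [abs_of_nonneg hy]))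
    have hlip := abs_pow_sub_pow_le x y k
    rw [abs_of_nonneg (sub_nonneg.2 hyx)] at hlip
    have : (x - y) * k * max |x| |y| ^ (k - 1) ≤ ε * k := by
      calc _ ≤ (x - y) * k * 1 := by gcongr
        _ ≤ ε * k := by nlinarith [(Nat.cast_nonneg k : (0 : ℝ) ≤ k)]
    linarith [le_abs_self (x ^ k - y ^ k)]

section NearestInteger

theorem nid_le_abs_sub_intCast (y : ℝ) (p : ℤ) : nid y ≤ |y - p| := round_le y p

theorem measurable_nid : Measurable nid := by
  unfold nid
  simp_rw [round_eq]
  fun_prop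

theorem nid_mul_le {q : ℝ} (hq : 0 < q) (x : ℝ) (p : ℤ) : nid (q * x) ≤ q * |x - p / q| := by
  calc nid (q * x) ≤ |q * x - p| := nid_le_abs_sub_intCast _ _
    _ = q * |x - p / q| := by
      rw [← abs_of_pos hq, ← abs_mul, abs_of_pos hq, mul_sub, mul_div_cancel₀ _ hq.ne']

theorem abs_sub_round_mul_div {q : ℝ} (hq : 0 < q) (x : ℝ) :
    |x - round (q * x) / q| = nid (q * x) / q := by
  rw [nid, eq_div_iff hq.ne', ← abs_of_pos hq, ← abs_mul, abs_of_pos hq, sub_mul,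
    div_mul_cancel₀ _ hq.ne', mul_comm]

variable {q r δ : ℝ}

theorem measurableSet_nid_mul_lt (q δ : ℝ) : MeasurableSet {x : ℝ | nid (q * x) < δ} :=
  measurableSet_lt (measurable_nid.comp (measurable_const_mul q)) measurable_const

theorem natCast_card_Icc_ceil_floor_le {a b : ℝ} (hab : a ≤ b + 1) :
    ((Finset.Icc ⌈a⌉ ⌊b⌋).card : ℝ) ≤ b - a + 1 := by
  have hceil := Int.le_ceil a
  have hfloor := Int.floor_le b
  rw [Int.card_Icc, ← Int.cast_natCast, Int.toNat_eq_max]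
  push_cast
  exact max_le (by linarith) (by linarith)

theorem setOf_nid_mul_lt_inter_Icc_subset (hq : 0 < q) (c d : ℝ) :
    {x | nid (q * x) < δ} ∩ Icc c d ⊆
      ⋃ p ∈ Finset.Icc ⌈q * c - δ⌉ ⌊q * d + δ⌋, Icc ((p - δ) / q) ((p + δ) / q) := by
  rintro x ⟨hx, hcx, hxd⟩
  have h := abs_lt.1 (show |q * x - round (q * x)| < δ from hx)
  refine mem_iUnion₂.2 ⟨round (q * x), Finset.mem_Icc.2 ⟨?_, ?_⟩, ?_, ?_⟩
  · exact Int.ceil_le.2 (by nlinarith)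
  · exact Int.le_floor.2 (by nlinarith)
  · rw [div_le_iff₀ hq]; linarith
  · rw [le_div_iff₀ hq]; linarith

theorem volume_real_nid_mul_lt_inter_Icc_le (hq : 0 < q) (hδ : 0 ≤ δ) {c d : ℝ} (hcd : c ≤ d) :
    volume.real ({x | nid (q * x) < δ} ∩ Icc c d) ≤
      2 * δ * (d - c) + 2 * δ * (2 * δ + 1) / q := by
  set P := Finset.Icc ⌈q * c - δ⌉ ⌊q * d + δ⌋
  have hcard : (P.card : ℝ) ≤ q * (d - c) + 2 * δ + 1 := by
    have := natCast_card_Icc_ceil_floor_le (a := q * c - δ) (b := q * d + δ) (by nlinarith)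
    linarith
  calc volume.real ({x | nid (q * x) < δ} ∩ Icc c d)
      ≤ volume.real (⋃ p ∈ P, Icc ((p - δ) / q) ((p + δ) / q)) :=
        measureReal_mono (setOf_nid_mul_lt_inter_Icc_subset hq c d)
          (measure_biUnion_lt_top P.finite_toSet fun _ _ => measure_Icc_lt_top).ne
    _ ≤ ∑ p ∈ P, volume.real (Icc ((p - δ) / q) ((p + δ) / q)) :=
        measureReal_biUnion_finset_le _ _
    _ = ∑ p ∈ P, 2 * δ / q := Finset.sum_congr rfl fun p _ => by
        rw [Real.volume_real_Icc_of_le (by gcongr; linarith)]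
        ring
    _ = P.card * (2 * δ / q) := by rw [Finset.sum_const, nsmul_eq_mul]
    _ ≤ (q * (d - c) + 2 * δ + 1) * (2 * δ / q) := by gcongr
    _ = 2 * δ * (d - c) + 2 * δ * (2 * δ + 1) / q := by field_simp; ring

theorem volume_real_nid_mul_lt_inter_nid_mul_lt_le (hq : 1 ≤ q) (hr : 0 < r) (hδ : 0 ≤ δ)
    (hδ' : δ ≤ 1 / 2) :
    volume.real ({x | nid (q * x) < δ} ∩ {x | nid (r * x) < δ} ∩ Icc 0 1) ≤
      4 * δ ^ 2 + 2 / q + 6 * q / r := by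
  have hq0 : 0 < q := by linarith
  set P := Finset.Icc ⌈q * 0 - δ⌉ ⌊q * 1 + δ⌋
  set J : ℤ → Set ℝ := fun p => Icc ((p - δ) / q) ((p + δ) / q)
  have hcard : (P.card : ℝ) ≤ q + 2 * δ + 1 := by
    have := natCast_card_Icc_ceil_floor_le (a := q * 0 - δ) (b := q * 1 + δ) (by linarith)
    linarith
  -- cover by the at most `q + 2δ + 1` windows `J p` around `p / q`, then apply the one-scale
  -- bound for `r` inside each window
  have hsub : {x | nid (q * x) < δ} ∩ {x | nid (r * x) < δ} ∩ Icc 0 1 ⊆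
      ⋃ p ∈ P, {x | nid (r * x) < δ} ∩ J p := by
    rintro x ⟨⟨hxq, hxr⟩, hx⟩
    obtain ⟨p, hp, hxp⟩ := mem_iUnion₂.1 (setOf_nid_mul_lt_inter_Icc_subset hq0 0 1 ⟨hxq, hx⟩)
    exact mem_iUnion₂.2 ⟨p, hp, hxr, hxp⟩
  have hpiece (p : ℤ) : volume.real ({x | nid (r * x) < δ} ∩ J p) ≤
      4 * δ ^ 2 / q + 2 * δ * (2 * δ + 1) / r := by
    refine (volume_real_nid_mul_lt_inter_Icc_le hr hδ (by gcongr; linarith)).trans_eq ?_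
    field_simp
    ring
  calc volume.real ({x | nid (q * x) < δ} ∩ {x | nid (r * x) < δ} ∩ Icc 0 1)
      ≤ volume.real (⋃ p ∈ P, {x | nid (r * x) < δ} ∩ J p) :=
        measureReal_mono hsub (measure_biUnion_lt_top P.finite_toSet fun _ _ =>
          (measure_mono inter_subset_right).trans_lt measure_Icc_lt_top).ne
    _ ≤ ∑ p ∈ P, volume.real ({x | nid (r * x) < δ} ∩ J p) := measureReal_biUnion_finset_le _ _
    _ ≤ P.card * (4 * δ ^ 2 / q + 2 * δ * (2 * δ + 1) / r) :=
        (Finset.sum_le_sum fun p _ => hpiece p).trans_eq (by rw [Finset.sum_const, nsmul_eq_mul])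
    _ ≤ (q + 2 * δ + 1) * (4 * δ ^ 2 / q + 2 * δ * (2 * δ + 1) / r) := by gcongr
    _ ≤ 4 * δ ^ 2 + 2 / q + 6 * q / r := by
        have h1 : (2 * δ + 1) * (4 * δ ^ 2) ≤ 2 := by nlinarith
        have h2 : (q + 2 * δ + 1) * (2 * δ * (2 * δ + 1)) ≤ 6 * q := by
          nlinarith [mul_le_mul (show q + 2 * δ + 1 ≤ 3 * q by linarith)
            (show 2 * δ * (2 * δ + 1) ≤ 2 by nlinarith) (by positivity) (by linarith)]
        have e : (q + 2 * δ + 1) * (4 * δ ^ 2 / q + 2 * δ * (2 * δ + 1) / r) =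
            4 * δ ^ 2 + (2 * δ + 1) * (4 * δ ^ 2) / q +
              (q + 2 * δ + 1) * (2 * δ * (2 * δ + 1)) / r := by
          field_simp
          ring
        rw [e]
        gcongr

theorem volume_real_nid_mul_lt_inter_Icc_ge {q : ℕ} (hq : 0 < q) (hδ : 0 ≤ δ) (hδ' : δ ≤ 1 / 2) :
    2 * δ * (1 - 1 / q) ≤ volume.real ({x | nid (q * x) < δ} ∩ Icc 0 1) := by
  have hq0 : (0 : ℝ) < q := by exact_mod_cast hq
  set J : ℕ → Set ℝ := fun p => Ioo ((p - δ) / q) ((p + δ) / q)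
  have hsub : (⋃ p ∈ Finset.Ico 1 q, J p) ⊆ {x | nid (q * x) < δ} ∩ Icc 0 1 := by
    refine iUnion₂_subset fun p hp x ⟨h1, h2⟩ => ?_
    obtain ⟨hp1, hpq⟩ := Finset.mem_Ico.1 hp
    have hp1' : (1 : ℝ) ≤ p := by exact_mod_cast hp1
    have hpq' : (p : ℝ) + 1 ≤ q := by exact_mod_cast hpq
    rw [div_lt_iff₀ hq0] at h1
    rw [lt_div_iff₀ hq0] at h2
    refine ⟨?_, ?_, ?_⟩
    · calc nid (q * x) ≤ |q * x - ((p : ℤ) : ℝ)| := nid_le_abs_sub_intCast _ _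
        _ < δ := by push_cast; rw [abs_lt]; constructor <;> linarith
    · nlinarith
    · nlinarith
  have hdisj : PairwiseDisjoint (↑(Finset.Ico 1 q)) J := by
    refine (pairwise_disjoint_on J |>.2 fun m n hmn => ?_).set_pairwise _
    have hmn' : (m : ℝ) + 1 ≤ n := by exact_mod_cast hmn
    refine Set.disjoint_left.2 fun x ⟨_, hxm⟩ ⟨hxn, _⟩ => ?_
    have : (n - δ) / q < (m + δ) / q := hxn.trans hxm
    rw [div_lt_div_iff_of_pos_right hq0] at this
    linarith
  calc 2 * δ * (1 - 1 / q) = ∑ p ∈ Finset.Ico 1 q, 2 * δ / q := by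
        rw [Finset.sum_const, nsmul_eq_mul, Nat.card_Ico, Nat.cast_sub hq]
        field_simp
        ring
    _ = ∑ p ∈ Finset.Ico 1 q, volume.real (J p) := Finset.sum_congr rfl fun p _ => by
        rw [Real.volume_real_Ioo_of_le (by gcongr; linarith)]
        ring
    _ = volume.real (⋃ p ∈ Finset.Ico 1 q, J p) :=
        (measureReal_biUnion_finset hdisj (fun _ _ => measurableSet_Ioo)
          fun _ _ => measure_Ioo_lt_top.ne).symm
    _ ≤ _ := measureReal_mono hsub
        ((measure_mono inter_subset_right).trans_lt measure_Icc_lt_top).ne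

theorem volume_real_inter_Icc_zero_one_le (S : Set ℝ) : volume.real (S ∩ Icc 0 1) ≤ 1 :=
  (measureReal_mono inter_subset_right measure_Icc_lt_top.ne).trans_eq (by simp)

theorem two_mul_pow_le_volume_real_nid_mul_lt_pow_add (k : ℕ) {q : ℕ} (hq : 0 < q)
    (hδ : 0 ≤ δ) (hδ' : δ ≤ 1 / 2) :
    (2 * δ) ^ k ≤ volume.real ({x | nid (q * x) < δ} ∩ Icc 0 1) ^ k + k / q := by
  have hv := volume_real_nid_mul_lt_inter_Icc_ge hq hδ hδ'
  have hq' : (0 : ℝ) < q := by exact_mod_cast hq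
  have hle : 2 * δ ≤ volume.real ({x | nid (q * x) < δ} ∩ Icc 0 1) + 1 / q := by
    have : 2 * δ / q ≤ 1 / q := by gcongr; linarith
    rw [mul_one_sub, mul_one_div] at hv
    linarith
  exact (pow_le_pow_add_mul_of_le_add k (by positivity) (by linarith) measureReal_nonneg
    (volume_real_inter_Icc_zero_one_le _) (by positivity) hle).trans_eq (by rw [mul_one_div])

theorem volume_real_nid_mul_lt_inter_nid_mul_lt_pow_le (k : ℕ) (hq : 1 ≤ q) (hr : 0 < r)
    (hδ : 0 ≤ δ) (hδ' : δ ≤ 1 / 2) :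
    volume.real ({x | nid (q * x) < δ} ∩ {x | nid (r * x) < δ} ∩ Icc 0 1) ^ k ≤
      ((2 * δ) ^ k) ^ 2 + k * (2 / q + 6 * q / r) := by
  have hq0 : 0 < q := by linarith
  have hw := volume_real_nid_mul_lt_inter_nid_mul_lt_le hq hr hδ hδ'
  have hsq : (4 * δ ^ 2) ^ k = ((2 * δ) ^ k) ^ 2 := by rw [pow_right_comm]; ring
  rw [← hsq]
  exact pow_le_pow_add_mul_of_le_add k measureReal_nonneg
    (volume_real_inter_Icc_zero_one_le _) (by positivity) (by nlinarith)
    (by positivity) (by linarith)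

end NearestInteger

theorem exists_lacunary_seq_of_infinite {S : Set ℕ} (hS : S.Infinite) :
    ∃ u : ℕ → ℕ, (∀ n, u n ∈ S) ∧ (∀ n, 0 < u n) ∧ ∀ i j, i < j → 2 ^ j * u i ≤ u j := by
  choose f hfS hf using fun b => hS.exists_gt b
  set u : ℕ → ℕ := fun n => Nat.rec (f 0) (fun n v => f (2 ^ (n + 1) * v)) n
  have hsucc (n : ℕ) : 2 ^ (n + 1) * u n < u (n + 1) := hf _
  have hmono : StrictMono u := strictMono_nat_of_lt_succ fun n =>
    (Nat.le_mul_of_pos_left _ (by positivity)).trans_lt (hsucc n)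
  refine ⟨u, fun n => ?_, fun n => (hf 0).trans_le (hmono.monotone n.zero_le), ?_⟩
  · cases n <;> exact hfS _
  · rintro i (_ | j) hij
    · omega
    · calc 2 ^ (j + 1) * u i ≤ 2 ^ (j + 1) * u j := by gcongr; exact hmono.monotone (by omega)
        _ ≤ u (j + 1) := (hsucc j).le

theorem one_div_le_of_lacunary {u : ℕ → ℕ} (hu : ∀ n, 0 < u n)
    (hlac : ∀ i j, i < j → 2 ^ j * u i ≤ u j) (n : ℕ) : 1 / (u n : ℝ) ≤ (1 / 2) ^ n := by
  have h2n : 2 ^ n ≤ u n := by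
    rcases n.eq_zero_or_pos with rfl | hn
    · exact hu 0
    · exact le_mul_of_one_le_right' (hu 0) |>.trans (hlac 0 n hn)
  rw [div_pow, one_pow]
  gcongr
  exact_mod_cast h2n

theorem div_le_of_lacunary {u : ℕ → ℕ} (hu : ∀ n, 0 < u n)
    (hlac : ∀ i j, i < j → 2 ^ j * u i ≤ u j) {i j : ℕ} (hij : i < j) :
    (u i : ℝ) / u j ≤ (1 / 2) ^ j := by
  rw [div_pow, one_pow, div_le_div_iff₀ (by exact_mod_cast hu j) (by positivity), one_mul]
  exact_mod_cast (mul_comm (u i) _).trans_le (hlac i j hij)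

theorem measureReal_pi_univ_pi_const {k : ℕ} (ν : Measure ℝ) [IsProbabilityMeasure ν] (T : Set ℝ) :
    (Measure.pi fun _ : Fin k => ν).real (univ.pi fun _ => T) = ν.real T ^ k := by
  simp [measureReal_def, Measure.pi_pi]

theorem volume_pi_Icc_inter_limsup_nid_mul_lt_eq_one (k : ℕ) {δ : ℝ} (hδ : 0 < δ)
    (hδ' : δ ≤ 1 / 2) {u : ℕ → ℕ} (hu : ∀ n, 0 < u n)
    (hlac : ∀ i j, i < j → 2 ^ j * u i ≤ u j) :
    volume (univ.pi (fun _ : Fin k => Icc (0 : ℝ) 1) ∩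
      limsup (fun n => univ.pi fun _ : Fin k => {x : ℝ | nid (u n * x) < δ}) atTop) = 1 := by
  set ν := volume.restrict (Icc (0 : ℝ) 1)
  have : IsProbabilityMeasure ν := ⟨by simp [ν]⟩
  set T : ℕ → Set ℝ := fun n => {x : ℝ | nid (u n * x) < δ}
  have hT (n : ℕ) : MeasurableSet (T n) := measurableSet_nid_mul_lt _ _
  set e : ℕ → ℝ := fun n => 6 * k * (1 / 2) ^ n
  have hk : (0 : ℝ) ≤ k := k.cast_nonneg
  have hlow (n : ℕ) : (2 * δ) ^ k - e n ≤ ν.real (T n) ^ k := by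
    have h := two_mul_pow_le_volume_real_nid_mul_lt_pow_add k (hu n) hδ.le hδ'
    have : (k : ℝ) / u n ≤ k * (1 / 2) ^ n := by
      rw [← mul_one_div]; gcongr; exact one_div_le_of_lacunary hu hlac n
    rw [measureReal_restrict_apply (hT n)]
    nlinarith [(by positivity : (0 : ℝ) ≤ k * (1 / 2) ^ n)]
  have hpair (i j : ℕ) (hij : i ≠ j) :
      ν.real (T i ∩ T j) ^ k ≤ ((2 * δ) ^ k) ^ 2 + e i + e j := by
    wlog hlt : i < j generalizing i j
    · have := this j i hij.symm (lt_of_le_of_ne (not_lt.1 hlt) hij.symm)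
      rwa [inter_comm, add_right_comm]
    have h := volume_real_nid_mul_lt_inter_nid_mul_lt_pow_le k (Nat.one_le_cast.2 (hu i))
      (by exact_mod_cast hu j : (0 : ℝ) < u j) hδ.le hδ'
    have : 2 / (u i : ℝ) + 6 * u i / u j ≤ 2 * (1 / 2) ^ i + 6 * (1 / 2) ^ j := by
      rw [← mul_one_div, mul_div_assoc]
      gcongr
      exacts [one_div_le_of_lacunary hu hlac i, div_le_of_lacunary hu hlac hlt]
    rw [measureReal_restrict_apply ((hT i).inter (hT j))]
    simp only [e]
    nlinarith [mul_le_mul_of_nonneg_left this hk, (by positivity : (0 : ℝ) ≤ k * (1 / 2) ^ i)]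
  have hlim := measure_limsup_eq_one_of_measureReal_inter_le (μ := Measure.pi fun _ : Fin k => ν)
    (A := fun n => univ.pi fun _ => T n) (fun n => MeasurableSet.univ_pi fun _ => hT n)
    (a := (2 * δ) ^ k) (by positivity) (e := e) (fun n => by positivity)
    (summable_geometric_two.mul_left (6 * (k : ℝ)))
    (fun n => by rw [measureReal_pi_univ_pi_const]; exact hlow n)
    (fun i j hij => by rw [← pi_inter_distrib, measureReal_pi_univ_pi_const]; exact hpair i j hij)
  rw [inter_comm, ← Measure.restrict_apply (MeasurableSet.measurableSet_limsup fun n =>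
    MeasurableSet.univ_pi fun _ => hT n), volume_pi, Measure.restrict_pi_pi]
  exact hlim

theorem volume_setOf_memW_eq_one_of_div_le (k : ℕ) {Φ : ℕ → ℝ} {S : Set ℕ} (hS : S.Infinite)
    {δ : ℝ} (hδ : 0 < δ) (hΦ : ∀ q ∈ S, δ / q ≤ Φ q) : volume {x | memW k Φ x} = 1 := by
  obtain ⟨u, huS, hu, hlac⟩ := exists_lacunary_seq_of_infinite hS
  have hmono : StrictMono u := fun i j hij =>
    ((Nat.lt_mul_iff_one_lt_left (hu i)).2 (Nat.one_lt_two_pow (by omega))).trans_le (hlac i j hij)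
  have hbox : volume (univ.pi fun _ : Fin k => Icc (0 : ℝ) 1) = 1 := by rw [volume_pi_pi]; simp
  refine le_antisymm ((measure_mono fun x hx => mem_univ_pi.2 hx.1).trans hbox.le) ?_
  rw [← volume_pi_Icc_inter_limsup_nid_mul_lt_eq_one k (δ := min δ (1 / 2)) (by positivity)
    (min_le_right _ _) hu hlac]
  refine measure_mono fun x ⟨hx, hlim⟩ => ⟨fun i => hx i (mem_univ i), ?_⟩
  rw [mem_limsup_iff_frequently_mem, Nat.frequently_atTop_iff_infinite] at hlim
  refine (hlim.image hmono.injective.injOn).mono ?_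
  rintro _ ⟨n, hn, rfl⟩
  have hq : (0 : ℝ) < u n := by exact_mod_cast hu n
  refine ⟨hu n, fun i => round (u n * x i), fun i => ?_⟩
  rw [abs_sub_round_mul_div hq]
  calc nid (u n * x i) / u n < min δ (1 / 2) / u n := by gcongr; exact hn i (mem_univ i)
    _ ≤ δ / u n := by gcongr; exact min_le_left _ _
    _ ≤ Φ (u n) := hΦ _ (huS n)

theorem exists_pos_eventually_le_of_liminf_ofReal_pos {ι : Type*} {l : Filter ι} {f : ι → ℝ}
    (h : 0 < liminf (fun n => ENNReal.ofReal (f n)) l) : ∃ c > 0, ∀ᶠ n in l, c ≤ f n := by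
  obtain ⟨c, -, hc0, hc⟩ := ENNReal.lt_iff_exists_real_btwn.1 h
  exact ⟨c, ENNReal.ofReal_pos.1 hc0,
    (eventually_lt_of_lt_liminf hc).mono fun n hn => (ENNReal.ofReal_lt_ofReal_iff'.1 hn).1.le⟩

theorem rpow_inv_div_le_rpow_div {q ψ c k s : ℝ} (hq : 0 < q) (hψ : 0 ≤ ψ) (hc : 0 ≤ c)
    (hk : 0 < k) (h : c ≤ q ^ (k - s) * (q * ψ) ^ s) : c ^ k⁻¹ / q ≤ ψ ^ (s / k) := by
  have e : q ^ (k - s) * (q * ψ) ^ s = (q * ψ ^ (s / k)) ^ k := by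
    rw [Real.mul_rpow hq.le hψ, ← mul_assoc, ← Real.rpow_add hq, sub_add_cancel,
      Real.mul_rpow hq.le (by positivity), ← Real.rpow_mul hψ, div_mul_cancel₀ _ hk.ne']
  rw [div_le_iff₀ hq, mul_comm]
  calc c ^ k⁻¹ ≤ ((q * ψ ^ (s / k)) ^ k) ^ k⁻¹ := by rw [← e]; gcongr
    _ = q * ψ ^ (s / k) := Real.rpow_rpow_inv (by positivity) hk.ne'

theorem stmt11_general (l k : ℕ) (hk : 2 ≤ k) (ψ : ℕ → ℝ)
    (hψ : ∀ q, 0 < ψ q ∧ ψ q ≤ 1)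
    (s : ℝ)
    (α : Fin l → ℝ) (hα : memW l ψ α)
    (hliminf : 0 < Filter.liminf
      (fun q : ℕ => ENNReal.ofReal ((q : ℝ) ^ ((k : ℝ) - s) * ((q : ℝ) * ψ q) ^ s))
      Filter.atTop) :
    volume {x : Fin k → ℝ |
        memW k (fun q =>
          (if ∀ i, nid ((q : ℝ) * α i) < (q : ℝ) * ψ q then ψ q else 0) ^ (s / k)) x} = 1 := by
  obtain ⟨c, hc, hev⟩ := exists_pos_eventually_le_of_liminf_ofReal_pos hliminf
  obtain ⟨N, hN⟩ := eventually_atTop.1 hev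
  have hk0 : (0 : ℝ) < k := by exact_mod_cast (by omega : 0 < k)
  refine volume_setOf_memW_eq_one_of_div_le k (hα.2.sdiff (finite_Iio N))
    (Real.rpow_pos_of_pos hc (k : ℝ)⁻¹) ?_
  rintro q ⟨⟨hq, p, hp⟩, hqN⟩
  have hq' : (0 : ℝ) < q := by exact_mod_cast hq
  have hgood (i : Fin l) : nid (q * α i) < q * ψ q :=
    (nid_mul_le hq' _ (p i)).trans_lt (mul_lt_mul_of_pos_left (hp i) hq')
  simp only [if_pos hgood]
  exact rpow_inv_div_le_rpow_div hq' (hψ q).1.le hc.le hk0 (hN q (not_lt.1 hqN))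

theorem stmt11 (l k : ℕ) (hk : 2 ≤ k) (ψ : ℕ → ℝ)
    (hmono : ∀ p q : ℕ, p ≤ q → ψ q ≤ ψ p) (hψ : ∀ q, 0 < ψ q ∧ ψ q ≤ 1)
    (hφ : ∀ q : ℕ, (q : ℝ) * ψ q ≤ 1)
    (s : ℝ) (hs : 0 < s) (hsk : s ≤ k)
    (α : Fin l → ℝ) (hα : memW l ψ α)
    (hliminf : 0 < Filter.liminf
      (fun q : ℕ => ENNReal.ofReal ((q : ℝ) ^ ((k : ℝ) - s) * ((q : ℝ) * ψ q) ^ s))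
      Filter.atTop) :
    volume {x : Fin k → ℝ |
        memW k (fun q =>
          (if ∀ i, nid ((q : ℝ) * α i) < (q : ℝ) * ψ q then ψ q else 0) ^ (s / k)) x} = 1 :=
  stmt11_general l k hk ψ hψ s α hα hliminf
end
end
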